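/- Transitivity of the happens-before relation on phasers: for all phasers P1, P2, P3, if P2 is well-ordered, P1 ≺ P2, and P2 ≺ P3, then P1 ≺ P3. -/
import Mathlib


/-- Registration modes: signal-wait, signal-only, wait-only. -/
inductive Mode
  | SW | SO | WO
deriving DecidableEq

/-- A mode can signal iff it is SW or SO. -/
def Mode.CanSignal (r : Mode) : Prop := r = Mode.SW ∨ r = Mode.SO

/-- A mode can wait iff it is SW or WO. -/
def Mode.CanWait (r : Mode) : Prop := r = Mode.SW ∨ r = Mode.WO

/-- A view: a signal phase, a wait phase, and a registration mode. -/
structure View where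
  sp : ℕ
  wp : ℕ
  mode : Mode

def View.CanSignal (v : View) : Prop := v.mode.CanSignal

def View.CanWait (v : View) : Prop := v.mode.CanWait

/-- Well-formed views. -/
def View.WellFormed (v : View) : Prop :=
  (v.CanWait ∧ v.wp = v.sp) ∨ (v.CanWait ∧ v.wp + 1 = v.sp) ∨
  (v.mode = Mode.SO ∧ v.wp ≤ v.sp)

/-- Happens-before on views: v1 ≺ v2. -/
def View.HB (v1 v2 : View) : Prop :=
  v1.sp < v2.wp ∧ v1.CanSignal ∧ v2.CanWait

/-- Cannot-happen-before on views: v1 ⊵ v2. -/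
def View.CHB (v1 v2 : View) : Prop :=
  v1.mode = Mode.WO ∨ v1.sp ≥ v2.wp ∨ v2.mode = Mode.SO

/-- A phaser: a finite partial map from task identifiers (ℕ) to views. -/
abbrev Phaser := Finmap (fun _ : ℕ => View)

/-- Happens-before on phasers: P ≺ Q. -/
def Phaser.HB (P Q : Phaser) : Prop :=
  ∃ t t' v1 v2, P.lookup t = some v1 ∧ Q.lookup t' = some v2 ∧ View.HB v1 v2

/-- Cannot-happen-before on phasers: P ⊵ Q. -/
def Phaser.CHB (P Q : Phaser) : Prop :=
  ∀ t t' v1 v2, P.lookup t = some v1 → Q.lookup t' = some v2 → View.CHB v1 v2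

/-- May-happen-in-parallel on phasers: P ∥ Q. -/
def Phaser.Par (P Q : Phaser) : Prop := Phaser.CHB P Q ∧ Phaser.CHB Q P

/-- A well-formed phaser: every view in its range is well-formed. -/
def Phaser.WellFormed (P : Phaser) : Prop :=
  ∀ t v, P.lookup t = some v → v.WellFormed

/-- A well-ordered phaser: P ⊵ P. -/
def Phaser.WellOrdered (P : Phaser) : Prop := Phaser.CHB P P

/-- Phaser operations. -/
inductive Op
  | signal
  | wait
  | register (t' : ℕ) (r : Mode)
  | drop

/-- The reduction relation on phasers: P —(t,o)→ Q. -/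
inductive Reduces : Phaser → ℕ → Op → Phaser → Prop
  | signal {P : Phaser} {t : ℕ} {v : View} :
      P.lookup t = some v →
      v.CanSignal →
      (v.mode = Mode.SW → v.wp = v.sp) →
      Reduces P t Op.signal (P.insert t { v with sp := v.sp + 1 })
  | wait {P : Phaser} {t : ℕ} {v : View} :
      P.lookup t = some v →
      v.CanWait →
      (v.mode = Mode.SW → v.wp + 1 = v.sp) →
      (v.mode = Mode.SO ∨
        ∀ t' v', P.lookup t' = some v' → v'.CanSignal → v'.sp ≥ v.wp + 1) →
      Reduces P t Op.wait (P.insert t { v with wp := v.wp + 1 })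
  | register {P : Phaser} {t t' : ℕ} {r : Mode} {v : View} :
      t' ∉ P →
      P.lookup t = some v →
      (r.CanWait → v.CanWait) →
      (r.CanSignal → v.CanSignal) →
      Reduces P t (Op.register t' r) (P.insert t' { v with mode := r })
  | drop {P : Phaser} {t : ℕ} :
      t ∈ P →
      Reduces P t Op.drop (P.erase t)

/-- Single-step reduction: P ⟶ Q iff some task performs some operation. -/
def SReduces (P Q : Phaser) : Prop := ∃ t o, Reduces P t o Q

/-- transitivity of happens-before on phasers. -/
theorem ph_hb_trans (P1 P2 P3 : Phaser) (h2 : P2.WellOrdered)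
    (h12 : Phaser.HB P1 P2) (h23 : Phaser.HB P2 P3) : Phaser.HB P1 P3 := by
  obtain ⟨t, t', v1, v2, hl1, hl2, hsp12, hcs1, hcw2⟩ := h12
  obtain ⟨s, s', w1, w2, hl3, hl4, hsp23, hcs3, hcw4⟩ := h23
  have hchb := h2 s t' w1 v2 hl3 hl2
  rcases hchb with h | h | h
  · rcases hcs3 with h' | h' <;> simp_all [View.CanSignal, Mode.CanSignal]
  · exact ⟨t, s', v1, w2, hl1, hl4, lt_of_lt_of_le hsp12 h |>.trans hsp23, hcs1, hcw4⟩
  · rcases hcw2 with h' | h' <;> simp_all [View.CanWait, Mode.CanWait]
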